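/- arXiv:2503.03386 — 2 statements merged into one kernel-verified Lean document; each statement's English description precedes it below -/
import Mathlib

section
/- Let B be the bilinear form on ℝ³ given by B((u1,u2,u3),(w1,w2,w3)) = u1·w1 − u2·w2 + u3·w3, let ω be the 1-form with ω_{(x,y,z)}(u1,u2,u3) = −sinh z·u1 + cosh z·u2, and let X1 = (cosh z, sinh z, 0), X2 = (0,0,1). Suppose v : ℝ³ → ℝ³ is a smooth vector field such that (i) for every point p and all u, w ∈ ℝ³, B(Dv(p)·u, w) + B(u, Dv(p)·w) = 0 (v is a Killing field of the flat metric dx² − dy² + dz²), and (ii) ω([v, X1]) = 0 and ω([v, X2]) = 0 at every point (v preserves the distribution span{X1, X2}). Then there exist real constants a, b, c such that v(x,y,z) = a·(−y, −x, −1) + b·(1,0,0) + c·(0,1,0) for all (x,y,z). -/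
/-- The vector field `X1(x,y,z) = (cosh z, sinh z, 0)` on `ℝ³`. -/
noncomputable def X1 (p : ℝ × ℝ × ℝ) : ℝ × ℝ × ℝ :=
  (Real.cosh p.2.2, Real.sinh p.2.2, 0)

/-- The vector field `X2(x,y,z) = (0, 0, 1)` on `ℝ³`. -/
def X2 (_p : ℝ × ℝ × ℝ) : ℝ × ℝ × ℝ :=
  (0, 0, 1)

/-- The Lie bracket of vector fields on `ℝ³`:
`[V,W](p) = DW(p)·V(p) − DV(p)·W(p)`. -/
noncomputable def lieBracketR3 (V W : ℝ × ℝ × ℝ → ℝ × ℝ × ℝ) (p : ℝ × ℝ × ℝ) : ℝ × ℝ × ℝ :=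
  fderiv ℝ W p (V p) - fderiv ℝ V p (W p)

/-- The bilinear form of the flat metric `dx² − dy² + dz²` on `ℝ³`. -/
def B (u w : ℝ × ℝ × ℝ) : ℝ :=
  u.1 * w.1 - u.2.1 * w.2.1 + u.2.2 * w.2.2

/-- The contact 1-form `ω` at the point `(x,y,z)`:
`ω(u1,u2,u3) = −sinh z · u1 + cosh z · u2`. -/
noncomputable def ω (p u : ℝ × ℝ × ℝ) : ℝ :=
  -Real.sinh p.2.2 * u.1 + Real.cosh p.2.2 * u.2.1


namespace SH2aux

abbrev E : Type := ℝ × ℝ × ℝ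

def e1 : E := (1, 0, 0)
def e2 : E := (0, 1, 0)
def e3 : E := (0, 0, 1)

@[simp] lemma e1_1 : e1.1 = 1 := rfl
@[simp] lemma e1_21 : e1.2.1 = 0 := rfl
@[simp] lemma e1_22 : e1.2.2 = 0 := rfl
@[simp] lemma e2_1 : e2.1 = 0 := rfl
@[simp] lemma e2_21 : e2.2.1 = 1 := rfl
@[simp] lemma e2_22 : e2.2.2 = 0 := rfl
@[simp] lemma e3_1 : e3.1 = 0 := rfl
@[simp] lemma e3_21 : e3.2.1 = 0 := rfl
@[simp] lemma e3_22 : e3.2.2 = 1 := rfl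

noncomputable def πx : E →L[ℝ] ℝ := ContinuousLinearMap.fst ℝ ℝ (ℝ × ℝ)
noncomputable def πy : E →L[ℝ] ℝ :=
  (ContinuousLinearMap.fst ℝ ℝ ℝ).comp (ContinuousLinearMap.snd ℝ ℝ (ℝ × ℝ))
noncomputable def πz : E →L[ℝ] ℝ :=
  (ContinuousLinearMap.snd ℝ ℝ ℝ).comp (ContinuousLinearMap.snd ℝ ℝ (ℝ × ℝ))

@[simp] lemma πx_apply (p : E) : πx p = p.1 := rfl
@[simp] lemma πy_apply (p : E) : πy p = p.2.1 := rfl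
@[simp] lemma πz_apply (p : E) : πz p = p.2.2 := rfl

noncomputable def Bclm (w : E) : E →L[ℝ] ℝ := w.1 • πx - w.2.1 • πy + w.2.2 • πz

lemma Bclm_apply (w y : E) : Bclm w y = B y w := by
  simp [Bclm, B]; ring

lemma B_symm (u w : E) : B u w = B w u := by simp [B]; ring

noncomputable def Φ (u w : E) : (E →L[ℝ] E) →L[ℝ] ℝ :=
  (Bclm w).comp (ContinuousLinearMap.apply ℝ E u) +
    (Bclm u).comp (ContinuousLinearMap.apply ℝ E w)

lemma Φ_apply (u w : E) (M : E →L[ℝ] E) : Φ u w M = B (M u) w + B (M w) u := by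
  simp [Φ, Bclm_apply]

noncomputable def DX1 (z : ℝ) : E →L[ℝ] E :=
  (Real.sinh z • πz).prod ((Real.cosh z • πz).prod 0)

lemma hasFDerivAt_X1 (p : E) : HasFDerivAt X1 (DX1 p.2.2) p := by
  have h3 : HasFDerivAt (fun q : E => q.2.2) πz p := πz.hasFDerivAt
  exact HasFDerivAt.prodMk (h3.cosh) (HasFDerivAt.prodMk (h3.sinh) (hasFDerivAt_const 0 p))

@[simp] lemma DX1_apply (z : ℝ) (u : E) :
    DX1 z u = (Real.sinh z * u.2.2, Real.cosh z * u.2.2, 0) := by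
  simp [DX1]

end SH2aux

open SH2aux

/-- If a smooth vector field `v` on `ℝ³` is a Killing field of the metric
`dx² − dy² + dz²` and preserves the distribution `span{X1, X2} = ker ω`, then `v`
is a real linear combination of `(−y, −x, −1)`, `(1,0,0)` and `(0,1,0)`. -/
theorem infinitesimal_symmetries_SH2 (v : ℝ × ℝ × ℝ → ℝ × ℝ × ℝ)
    (hsmooth : ContDiff ℝ (⊤ : ℕ∞) v)
    (hKilling : ∀ p u w : ℝ × ℝ × ℝ,
      B (fderiv ℝ v p u) w + B u (fderiv ℝ v p w) = 0)
    (hdist1 : ∀ p : ℝ × ℝ × ℝ, ω p (lieBracketR3 v X1 p) = 0)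
    (hdist2 : ∀ p : ℝ × ℝ × ℝ, ω p (lieBracketR3 v X2 p) = 0) :
    ∃ a b c : ℝ, ∀ x y z : ℝ,
      v (x, y, z) =
        a • ((-y, -x, -1) : ℝ × ℝ × ℝ) + b • ((1, 0, 0) : ℝ × ℝ × ℝ)
          + c • ((0, 1, 0) : ℝ × ℝ × ℝ) := by
  set A : E → E →L[ℝ] E := fderiv ℝ v with hA
  have hvdiff : Differentiable ℝ v := hsmooth.differentiable (by simp)
  have hAcd : ContDiff ℝ (⊤ : ℕ∞) A := hsmooth.fderiv_right (by simp)
  have hAdiff : Differentiable ℝ A := hAcd.differentiable (by simp)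
  -- symmetry of the second derivative
  have hsymm : ∀ p x y : E, fderiv ℝ A p x y = fderiv ℝ A p y x := fun p x y =>
    second_derivative_symmetric (fun q => (hvdiff q).hasFDerivAt) (hAdiff p).hasFDerivAt x y
  -- differentiated Killing equation
  have hKd : ∀ p x u w : E, B (fderiv ℝ A p x u) w + B (fderiv ℝ A p x w) u = 0 := by
    intro p x u w
    have hΦ : HasFDerivAt (fun q => Φ u w (A q)) ((Φ u w).comp (fderiv ℝ A p)) p :=
      (Φ u w).hasFDerivAt.comp p (hAdiff p).hasFDerivAt
    have hzero : (fun q => Φ u w (A q)) = fun _ => (0 : ℝ) := by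
      funext q
      rw [Φ_apply]
      have h := hKilling q u w
      rw [B_symm u (A q w)] at h
      exact h
    rw [hzero] at hΦ
    have h0 : (Φ u w).comp (fderiv ℝ A p) = 0 := hΦ.unique (hasFDerivAt_const 0 p)
    have h2 := congrArg (fun (L : E →L[ℝ] ℝ) => L x) h0
    simpa [Φ_apply] using h2
  -- the second derivative vanishes
  have hT : ∀ (p x u w : E), B (fderiv ℝ A p x u) w = 0 := by
    intro p x u w
    have s2 : ∀ a b c : E, B (fderiv ℝ A p a b) c = - B (fderiv ℝ A p a c) b := by
      intro a b c
      have h := hKd p a b c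
      linarith
    have s1 : ∀ a b c : E, B (fderiv ℝ A p a b) c = B (fderiv ℝ A p b a) c := by
      intro a b c; rw [hsymm p a b]
    have chain : B (fderiv ℝ A p x u) w = - B (fderiv ℝ A p x u) w := by
      calc B (fderiv ℝ A p x u) w = - B (fderiv ℝ A p x w) u := s2 x u w
        _ = - B (fderiv ℝ A p w x) u := by rw [s1 x w]
        _ = B (fderiv ℝ A p w u) x := by rw [s2 w x u, neg_neg]
        _ = B (fderiv ℝ A p u w) x := by rw [s1 w u]
        _ = - B (fderiv ℝ A p u x) w := s2 u w x
        _ = - B (fderiv ℝ A p x u) w := by rw [s1 u x]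
    linarith
  have hA'' : ∀ p : E, fderiv ℝ A p = 0 := by
    intro p
    refine ContinuousLinearMap.ext fun x => ContinuousLinearMap.ext fun u => ?_
    have h1 := hT p x u e1
    have h2 := hT p x u e2
    have h3 := hT p x u e3
    simp [B] at h1 h2 h3
    have : (fderiv ℝ A p x u) = (0 : E) := Prod.ext_iff.2 ⟨h1, Prod.ext_iff.2 ⟨h2, h3⟩⟩
    simpa using this
  have hAc : ∀ p : E, A p = A 0 := fun p => is_const_of_fderiv_eq_zero hAdiff hA'' p 0
  set A₀ : E →L[ℝ] E := A 0 with hA₀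
  have hAc' : ∀ p : E, fderiv ℝ v p = A₀ := fun p => hAc p
  -- affine representation
  have hrep : ∀ p : E, v p = v 0 + A₀ p := by
    intro p
    have hg : ∀ q : E, HasFDerivAt (fun r : E => v r - A₀ r) (0 : E →L[ℝ] E) q := by
      intro q
      have h1 : HasFDerivAt v A₀ q := by
        have h0 := (hvdiff q).hasFDerivAt
        rwa [hAc' q] at h0
      have h2 := h1.sub A₀.hasFDerivAt; rw [sub_self] at h2; exact h2
    have hc := is_const_of_fderiv_eq_zero (𝕜 := ℝ)
      (fun q => (hg q).differentiableAt) (fun q => (hg q).fderiv) p 0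
    simp only [map_zero, sub_zero] at hc
    rw [sub_eq_iff_eq_add] at hc
    exact hc
  -- Killing relations at 0
  have k11 : (A₀ e1).1 = 0 := by
    have h := hKilling 0 e1 e1; rw [hAc] at h; simp [B] at h; linarith
  have k22 : (A₀ e2).2.1 = 0 := by
    have h := hKilling 0 e2 e2; rw [hAc] at h; simp [B] at h; linarith
  have k33 : (A₀ e3).2.2 = 0 := by
    have h := hKilling 0 e3 e3; rw [hAc] at h; simp [B] at h; linarith
  have k12 : (A₀ e2).1 = (A₀ e1).2.1 := by
    have h := hKilling 0 e1 e2; rw [hAc] at h; simp [B] at h; linarith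
  have k13 : (A₀ e1).2.2 + (A₀ e3).1 = 0 := by
    have h := hKilling 0 e1 e3; rw [hAc] at h; simp [B] at h; linarith
  have k23 : (A₀ e2).2.2 - (A₀ e3).2.1 = 0 := by
    have h := hKilling 0 e2 e3; rw [hAc] at h; simp [B] at h; linarith
  -- distribution condition for X2
  have hd2 : ∀ z : ℝ, Real.sinh z * (A₀ e3).1 - Real.cosh z * (A₀ e3).2.1 = 0 := by
    intro z
    have h := hdist2 ((0 : ℝ), (0 : ℝ), z)
    have hX2 : fderiv ℝ X2 ((0 : ℝ), (0 : ℝ), z) = 0 := (hasFDerivAt_const _ _).fderiv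
    rw [lieBracketR3, hX2] at h
    have hx2 : X2 ((0 : ℝ), (0 : ℝ), z) = e3 := rfl
    rw [hx2, hAc'] at h
    simp [ω] at h
    linarith
  have h32 : (A₀ e3).2.1 = 0 := by simpa using hd2 0
  have h31 : (A₀ e3).1 = 0 := by
    have h := hd2 1
    rw [h32, mul_zero, sub_zero] at h
    have hs : Real.sinh 1 ≠ 0 := ne_of_gt (Real.sinh_pos_iff.2 one_pos)
    exact (mul_eq_zero.1 h).resolve_left hs
  have h12' : (A₀ e1).2.2 = 0 := by rw [h31] at k13; linarith
  have h22' : (A₀ e2).2.2 = 0 := by rw [h32] at k23; linarith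
  -- distribution condition for X1
  have hv3 : ∀ p : E, (v p).2.2 = (A₀ e2).1 := by
    intro p
    have h := hdist1 p
    rw [lieBracketR3, (hasFDerivAt_X1 p).fderiv, hAc'] at h
    have hx1 : X1 p = Real.cosh p.2.2 • e1 + Real.sinh p.2.2 • e2 := by
      simp [X1, e1, e2, Prod.ext_iff]
    rw [hx1, map_add, map_smul, map_smul] at h
    have hcs : Real.cosh p.2.2 ^ 2 - Real.sinh p.2.2 ^ 2 = 1 := Real.cosh_sq_sub_sinh_sq p.2.2
    simp only [ω, DX1_apply, Prod.fst_sub, Prod.snd_sub, Prod.fst_add, Prod.snd_add,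
      Prod.smul_fst, Prod.smul_snd, smul_eq_mul] at h
    rw [k11, k22, ← k12] at h
    linear_combination h - ((v p).2.2 - (A₀ e2).1) * hcs
  -- final assembly
  refine ⟨-(A₀ e2).1, (v 0).1, (v 0).2.1, ?_⟩
  intro x y z
  have hdecomp : ((x, y, z) : E) = x • e1 + y • e2 + z • e3 := by
    simp [e1, e2, e3, Prod.ext_iff]
  have hv00 : (v 0).2.2 = (A₀ e2).1 := hv3 0
  rw [hrep (x, y, z), hdecomp, map_add, map_add, map_smul, map_smul, map_smul]
  refine Prod.ext_iff.2 ⟨?_, Prod.ext_iff.2 ⟨?_, ?_⟩⟩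
  · simp only [Prod.fst_add, Prod.smul_fst, smul_eq_mul]
    rw [k11, h31]
    ring
  · simp only [Prod.snd_add, Prod.fst_add, Prod.smul_snd, Prod.smul_fst, smul_eq_mul]
    rw [k22, h32, ← k12]
    ring
  · simp only [Prod.snd_add, Prod.smul_snd, smul_eq_mul]
    rw [h12', h22', k33, hv00]
    ring
end

section
/- The vector field v1(x,y,z) = (−y, −x, −1) on ℝ³ commutes with both frame fields: [v1, X1] = 0 and [v1, X2] = 0 identically, where X1 = (cosh z, sinh z, 0) and X2 = (0,0,1). -/
/-- The infinitesimal symmetry `v1(x,y,z) = (−y, −x, −1)` on `ℝ³`. -/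
def v1 (p : ℝ × ℝ × ℝ) : ℝ × ℝ × ℝ :=
  (-p.2.1, -p.1, -1)

open ContinuousLinearMap

lemma lieBracketR3_eq_of_hasFDerivAt {V W : ℝ × ℝ × ℝ → ℝ × ℝ × ℝ}
    {A B : (ℝ × ℝ × ℝ) →L[ℝ] ℝ × ℝ × ℝ} {p : ℝ × ℝ × ℝ}
    (hV : HasFDerivAt V A p) (hW : HasFDerivAt W B p) :
    lieBracketR3 V W p = B (V p) - A (W p) := by
  rw [lieBracketR3, hV.fderiv, hW.fderiv]

noncomputable def zCoord : (ℝ × ℝ × ℝ) →L[ℝ] ℝ :=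
  snd ℝ ℝ ℝ ∘L snd ℝ ℝ (ℝ × ℝ)

lemma HasDerivAt.hasFDerivAt_comp_zCoord {E : Type*} [NormedAddCommGroup E] [NormedSpace ℝ E]
    {γ : ℝ → E} {γ' : E} {p : ℝ × ℝ × ℝ} (h : HasDerivAt γ γ' p.2.2) :
    HasFDerivAt (fun q : ℝ × ℝ × ℝ => γ q.2.2) (zCoord.smulRight γ') p :=
  (h.hasFDerivAt.comp p zCoord.hasFDerivAt).congr_fderiv (by ext <;> simp)

lemma hasFDerivAt_X1 (p : ℝ × ℝ × ℝ) :
    HasFDerivAt X1 (zCoord.smulRight (Real.sinh p.2.2, Real.cosh p.2.2, 0)) p :=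
  ((Real.hasDerivAt_cosh _).prodMk ((Real.hasDerivAt_sinh _).prodMk
    (hasDerivAt_const _ (0 : ℝ)))).hasFDerivAt_comp_zCoord

lemma hasFDerivAt_X2 (p : ℝ × ℝ × ℝ) : HasFDerivAt X2 (0 : (ℝ × ℝ × ℝ) →L[ℝ] ℝ × ℝ × ℝ) p :=
  hasFDerivAt_const ((0, 0, 1) : ℝ × ℝ × ℝ) p

noncomputable def v1Linear : (ℝ × ℝ × ℝ) →L[ℝ] ℝ × ℝ × ℝ :=
  (-(fst ℝ ℝ ℝ ∘L snd ℝ ℝ (ℝ × ℝ))).prod ((-(fst ℝ ℝ (ℝ × ℝ))).prod 0)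

lemma v1_eq_v1Linear_add : v1 = fun p => v1Linear p + (0, 0, -1) := by
  funext p
  simp [v1, v1Linear]

lemma hasFDerivAt_v1 (p : ℝ × ℝ × ℝ) : HasFDerivAt v1 v1Linear p := by
  rw [v1_eq_v1Linear_add]
  exact v1Linear.hasFDerivAt.add_const _

/-- `v1` commutes with both frame fields: `[v1, X1] = 0` and `[v1, X2] = 0`. -/
theorem v1_commutes_with_frame (p : ℝ × ℝ × ℝ) :
    lieBracketR3 v1 X1 p = 0 ∧ lieBracketR3 v1 X2 p = 0 := by
  constructor
  · rw [lieBracketR3_eq_of_hasFDerivAt (hasFDerivAt_v1 p) (hasFDerivAt_X1 p)]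
    simp [v1, X1, v1Linear, zCoord]
  · rw [lieBracketR3_eq_of_hasFDerivAt (hasFDerivAt_v1 p) (hasFDerivAt_X2 p)]
    simp [X2, v1Linear]
end
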